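/- If T is a rearrangement on symmetrizable functions on ℝⁿ, then for every measurable set A of finite measure and every α ≥ 0 and β ∈ ℝ, T(α·1_A + β) = α·T(1_A) + β almost everywhere. -/
import Mathlib

open MeasureTheory Set Filter

/-- The essential infimum of a real-valued function, computed in `EReal`. -/
noncomputable def essInfE {n : ℕ} (f : EuclideanSpace ℝ (Fin n) → ℝ) : EReal :=
  essInf (fun x => (f x : EReal)) volume

/-- A function `f : ℝⁿ → ℝ` is symmetrizable if it is measurable and every
super-level set `{x | f x > t}` with `t > essinf f` has finite Lebesgue measure. -/
def Symmetrizable {n : ℕ} (f : EuclideanSpace ℝ (Fin n) → ℝ) : Prop :=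
  Measurable f ∧ ∀ t : ℝ, essInfE f < (t : EReal) → volume {x | t < f x} < ⊤

namespace Stmt4Aux

variable {n : ℕ}

lemma vol_ne_zero : (volume : Measure (EuclideanSpace ℝ (Fin n))) ≠ 0 := by
  intro h
  have : (volume : Measure (EuclideanSpace ℝ (Fin n))) univ ≠ 0 :=
    (isOpen_univ.measure_ne_zero volume univ_nonempty)
  simp [h] at this

lemma essInfE_ge {f : EuclideanSpace ℝ (Fin n) → ℝ} {m : ℝ} (h : ∀ x, m ≤ f x) :
    (m : EReal) ≤ essInfE f := by
  have h1 : essInf (fun _ : EuclideanSpace ℝ (Fin n) => (m : EReal)) volume ≤ essInfE f :=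
    essInf_mono_ae (Filter.Eventually.of_forall fun x => by
      show (m : EReal) ≤ (f x : EReal); exact_mod_cast h x)
  rwa [essInf_const _ vol_ne_zero] at h1

lemma essInfE_le {f : EuclideanSpace ℝ (Fin n) → ℝ} {t : ℝ}
    (h : volume {x | f x ≤ t} ≠ 0) : essInfE f ≤ (t : EReal) := by
  apply Filter.liminf_le_of_frequently_le'
  apply frequently_ae_iff.2
  convert h using 2
  ext x
  simp [EReal.coe_le_coe_iff]

/-- If all strict super-level sets below `m` have full measure, then a symmetrizable
function is a.e. at least `m`. -/
lemma ae_ge_of_levels {h : EuclideanSpace ℝ (Fin n) → ℝ} (hsym : Symmetrizable h) {m : ℝ}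
    (Hlev : ∀ t : ℝ, t < m → volume {x | t < h x} = volume (univ : Set (EuclideanSpace ℝ (Fin n)))) :
    ∀ᵐ x ∂(volume : Measure (EuclideanSpace ℝ (Fin n))), m ≤ h x := by
  have key : ∀ t : ℝ, t < m → volume {x | h x ≤ t} = 0 := by
    intro t ht
    by_contra h0
    have hle : essInfE h ≤ (t : EReal) := essInfE_le h0
    set t' : ℝ := (t + m) / 2 with ht'
    have h1 : essInfE h < (t' : EReal) := by
      refine lt_of_le_of_lt hle ?_
      exact_mod_cast (by linarith : t < t')
    have hfin : volume {x | t' < h x} < ⊤ := hsym.2 t' h1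
    rw [Hlev t' (by linarith)] at hfin
    -- volume univ < ⊤, so sub-level set has measure 0
    have hsplit : volume {x | h x ≤ t} + volume {x | t < h x} = volume (univ : Set (EuclideanSpace ℝ (Fin n))) := by
      have hms : MeasurableSet {x | h x ≤ t} := measurableSet_le hsym.1 measurable_const
      have := measure_add_measure_compl (μ := volume) hms
      have hc : {x | h x ≤ t}ᶜ = {x | t < h x} := by ext x; simp
      rwa [hc] at this
    rw [Hlev t ht] at hsplit
    have : volume {x | h x ≤ t} + volume (univ : Set (EuclideanSpace ℝ (Fin n)))
        = 0 + volume (univ : Set (EuclideanSpace ℝ (Fin n))) := by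
      rw [hsplit, zero_add]
    have := (ENNReal.add_left_inj (ne_of_lt hfin)).mp this
    exact h0 this
  have hnull : volume {x | h x < m} = 0 := by
    have hsub : {x | h x < m} ⊆ ⋃ k : ℕ, {x | h x ≤ m - 1 / (k + 1)} := by
      intro x hx
      simp only [mem_setOf_eq] at hx
      obtain ⟨k, hk⟩ := exists_nat_one_div_lt (by linarith : (0:ℝ) < m - h x)
      exact mem_iUnion.2 ⟨k, by simp only [mem_setOf_eq]; linarith⟩
    refine measure_mono_null hsub (measure_iUnion_null fun k => ?_)
    have hpos : (0:ℝ) < 1 / (k + 1) := by positivity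
    exact key _ (by linarith)
  rw [ae_iff]
  convert hnull using 2
  ext x; simp


section Levels

variable (A : Set (EuclideanSpace ℝ (Fin n)))

/-- abbreviation for the affine image of the indicator. -/
noncomputable def aff (s r : ℝ) : EuclideanSpace ℝ (Fin n) → ℝ :=
  fun x => s * A.indicator 1 x + r

lemma aff_mem {s r : ℝ} {x : EuclideanSpace ℝ (Fin n)} (hx : x ∈ A) : aff A s r x = s + r := by
  simp [aff, indicator_of_mem hx]

lemma aff_not_mem {s r : ℝ} {x : EuclideanSpace ℝ (Fin n)} (hx : x ∉ A) : aff A s r x = r := by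
  simp [aff, indicator_of_notMem hx]

lemma lev_univ {s r t : ℝ} (hs : 0 ≤ s) (ht : t < r) :
    {x | t < aff A s r x} = (univ : Set (EuclideanSpace ℝ (Fin n))) := by
  ext x
  simp only [mem_setOf_eq, mem_univ, iff_true]
  by_cases hx : x ∈ A
  · rw [aff_mem A hx]
    linarith
  · rw [aff_not_mem A hx]
    exact ht

lemma lev_A {s r t : ℝ} (hrt : r ≤ t) (hts : t < s + r) :
    {x | t < aff A s r x} = A := by
  ext x
  simp only [mem_setOf_eq]
  by_cases hx : x ∈ A
  · rw [aff_mem A hx]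
    simp [hx, hts]
  · rw [aff_not_mem A hx]
    simp [hx]
    linarith

lemma lev_empty {s r t : ℝ} (hs : 0 ≤ s) (hts : s + r ≤ t) :
    {x | t < aff A s r x} = (∅ : Set (EuclideanSpace ℝ (Fin n))) := by
  ext x
  simp only [mem_setOf_eq, mem_empty_iff_false, iff_false, not_lt]
  by_cases hx : x ∈ A
  · rw [aff_mem A hx]; exact hts
  · rw [aff_not_mem A hx]; linarith

lemma symm_aff (hA : MeasurableSet A) (hAfin : volume A < ⊤) {s r : ℝ} (hs : 0 ≤ s) :
    Symmetrizable (aff A s r) := by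
  constructor
  · exact (measurable_const.mul (measurable_const.indicator hA)).add measurable_const
  · intro t ht
    have hr : (r : EReal) ≤ essInfE (aff A s r) := by
      apply essInfE_ge
      intro x
      by_cases hx : x ∈ A
      · rw [aff_mem A hx]
        have : 0 ≤ s + 0 := by linarith
        nlinarith [indicator_nonneg (fun y (_ : y ∈ A) => (zero_le_one : (0:ℝ) ≤ 1)) x]
      · rw [aff_not_mem A hx]
    have hrt : r < t := by exact_mod_cast lt_of_le_of_lt hr ht
    have hsub : {x | t < aff A s r x} ⊆ A := by
      intro x hx
      by_contra hxA
      rw [mem_setOf_eq, aff_not_mem A hxA] at hx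
      linarith
    exact lt_of_le_of_lt (measure_mono hsub) hAfin

end Levels

section Main

variable (T : (EuclideanSpace ℝ (Fin n) → ℝ) → (EuclideanSpace ℝ (Fin n) → ℝ))
variable (A : Set (EuclideanSpace ℝ (Fin n)))

/-- the "top set" of `T (aff A s r)` -/
def topSet (s r : ℝ) : Set (EuclideanSpace ℝ (Fin n)) :=
  {x | r + s / 2 < T (aff A s r) x}

lemma topSet_meas (hmap : ∀ f, Symmetrizable f → Symmetrizable (T f))
    (hA : MeasurableSet A) (hAfin : volume A < ⊤) (s r : ℝ) (hs : 0 ≤ s) :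
    MeasurableSet (topSet T A s r) :=
  measurableSet_lt measurable_const (hmap _ (symm_aff A hA hAfin hs)).1

lemma topSet_vol (hequi : ∀ f, Symmetrizable f → ∀ t : ℝ,
      volume {x | t < T f x} = volume {x | t < f x})
    (hA : MeasurableSet A) (hAfin : volume A < ⊤) {s r : ℝ} (hs : 0 < s) : volume (topSet T A s r) = volume A := by
  have h1 := hequi (aff A s r) (symm_aff A hA hAfin hs.le) (r + s / 2)
  have h2 : {x | r + s / 2 < aff A s r x} = A := lev_A A (by linarith) (by linarith)
  rw [h2] at h1
  exact h1

lemma structure_lemma (hmap : ∀ f, Symmetrizable f → Symmetrizable (T f))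
    (hequi : ∀ f, Symmetrizable f → ∀ t : ℝ,
      volume {x | t < T f x} = volume {x | t < f x})
    (hA : MeasurableSet A) (hAfin : volume A < ⊤) {s r : ℝ} (hs : 0 < s) :
    ∀ᵐ x ∂(volume : Measure (EuclideanSpace ℝ (Fin n))),
      (x ∈ topSet T A s r → T (aff A s r) x = s + r) ∧
      (x ∉ topSet T A s r → T (aff A s r) x = r) := by
  have hsym : Symmetrizable (aff A s r) := symm_aff A hA hAfin hs.le
  have hTsym : Symmetrizable (T (aff A s r)) := hmap _ hsym
  set h : EuclideanSpace ℝ (Fin n) → ℝ := T (aff A s r) with hh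
  -- upper bound
  have hupper : ∀ᵐ x ∂(volume : Measure (EuclideanSpace ℝ (Fin n))), h x ≤ s + r := by
    rw [ae_iff]
    have : {x | ¬ h x ≤ s + r} = {x | s + r < h x} := by ext x; simp
    rw [this, hequi _ hsym, lev_empty A hs.le le_rfl]
    simp
  -- lower bound
  have hlower : ∀ᵐ x ∂(volume : Measure (EuclideanSpace ℝ (Fin n))), r ≤ h x := by
    apply ae_ge_of_levels hTsym
    intro t ht
    rw [hequi _ hsym, lev_univ A hs.le ht]
  -- no middle values
  have hmid : ∀ᵐ x ∂(volume : Measure (EuclideanSpace ℝ (Fin n))),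
      ¬ (r < h x ∧ h x < s + r) := by
    rw [ae_iff]
    simp only [not_not]
    have hsub : {x | r < h x ∧ h x < s + r} ⊆
        ⋃ k : ℕ, ({x | r < h x} \ {x | s + r - s / (k + 1) < h x}) := by
      intro x hx
      obtain ⟨hx1, hx2⟩ := hx
      have hε : (0:ℝ) < (s + r - h x) / s := by
        apply div_pos <;> linarith
      obtain ⟨k, hk⟩ := exists_nat_one_div_lt hε
      refine mem_iUnion.2 ⟨k, mem_diff_of_mem hx1 ?_⟩
      simp only [mem_setOf_eq, not_lt]
      have hk' : s / (k + 1) < s + r - h x := by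
        rw [div_lt_iff₀ (by positivity)] at hk ⊢
        calc s = ((1:ℝ) * s) := by ring
        _ < (s + r - h x) / s * (↑k + 1) * s := by
              have := mul_lt_mul_of_pos_right hk hs
              linarith
        _ = (s + r - h x) * (↑k+1) := by field_simp
      linarith
    refine measure_mono_null hsub (measure_iUnion_null fun k => ?_)
    have hlev : (0:ℝ) < s / (k + 1) := by positivity
    have hlev2 : s / (k + 1) ≤ s := by
      rw [div_le_iff₀ (by positivity)]
      nlinarith
    have e1 : volume {x | r < h x} = volume A := by
      rw [hequi _ hsym, lev_A A le_rfl (by linarith)]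
    have e2 : volume {x | s + r - s / (k + 1) < h x} = volume A := by
      rw [hequi _ hsym, lev_A A (by linarith) (by linarith)]
    have hsubset : {x | s + r - s / (k + 1) < h x} ⊆ {x | r < h x} := by
      intro x hx
      simp only [mem_setOf_eq] at hx ⊢
      linarith
    rw [measure_diff hsubset
      (measurableSet_lt measurable_const hTsym.1).nullMeasurableSet
      (by rw [e2]; exact hAfin.ne), e1, e2, tsub_self]
  filter_upwards [hupper, hlower, hmid] with x h1 h2 h3
  constructor
  · intro hx
    simp only [topSet, mem_setOf_eq] at hx
    by_contra hne
    exact h3 ⟨by linarith, lt_of_le_of_ne h1 hne⟩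
  · intro hx
    simp only [topSet, mem_setOf_eq, not_lt] at hx
    by_contra hne
    have : r < h x := lt_of_le_of_ne h2 (fun e => hne e.symm)
    exact h3 ⟨this, by linarith⟩

lemma chain (hmap : ∀ f, Symmetrizable f → Symmetrizable (T f))
    (hequi : ∀ f, Symmetrizable f → ∀ t : ℝ,
      volume {x | t < T f x} = volume {x | t < f x})
    (hmono : ∀ f g, Symmetrizable f → Symmetrizable g →
      f ≤ᵐ[volume] g → T f ≤ᵐ[volume] T g)
    (hA : MeasurableSet A) (hAfin : volume A < ⊤)
    {s₁ r₁ s₂ r₂ : ℝ} (hs₁ : 0 < s₁) (hs₂ : 0 < s₂)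
    (hr : r₁ ≤ r₂) (htop : s₁ + r₁ ≤ s₂ + r₂) (hcond : r₂ < s₁ + r₁) :
    topSet T A s₁ r₁ =ᵐ[volume] topSet T A s₂ r₂ := by
  have hsym₁ : Symmetrizable (aff A s₁ r₁) := symm_aff A hA hAfin hs₁.le
  have hsym₂ : Symmetrizable (aff A s₂ r₂) := symm_aff A hA hAfin hs₂.le
  have hle : aff A s₁ r₁ ≤ᵐ[volume] aff A s₂ r₂ := by
    apply Eventually.of_forall
    intro x
    by_cases hx : x ∈ A
    · rw [aff_mem A hx, aff_mem A hx]; exact htop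
    · rw [aff_not_mem A hx, aff_not_mem A hx]; exact hr
  have hmono' := hmono _ _ hsym₁ hsym₂ hle
  have st₁ := structure_lemma T A hmap hequi hA hAfin (r := r₁) hs₁
  have st₂ := structure_lemma T A hmap hequi hA hAfin (r := r₂) hs₂
  have step1 : volume (topSet T A s₁ r₁ \ topSet T A s₂ r₂) = 0 := by
    have h0 : ∀ᵐ x ∂(volume : Measure (EuclideanSpace ℝ (Fin n))),
        ¬ (x ∈ topSet T A s₁ r₁ \ topSet T A s₂ r₂) := by
      filter_upwards [st₁, st₂, hmono'] with x a b c
      rintro ⟨hx₁, hx₂⟩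
      have e₁ : T (aff A s₁ r₁) x = s₁ + r₁ := a.1 hx₁
      have e₂ : T (aff A s₂ r₂) x = r₂ := b.2 hx₂
      rw [e₁, e₂] at c
      linarith
    have := ae_iff.mp h0
    refine measure_mono_null (fun x hx => ?_) this
    simpa using hx
  have hE₁ : volume (topSet T A s₁ r₁) = volume A := topSet_vol T A hequi hA hAfin hs₁
  have hE₂ : volume (topSet T A s₂ r₂) = volume A := topSet_vol T A hequi hA hAfin hs₂
  have hm₂ : MeasurableSet (topSet T A s₂ r₂) := topSet_meas T A hmap hA hAfin _ _ hs₂.le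
  have hm₁ : MeasurableSet (topSet T A s₁ r₁) := topSet_meas T A hmap hA hAfin _ _ hs₁.le
  have step2 : volume (topSet T A s₂ r₂ \ topSet T A s₁ r₁) = 0 := by
    have i₁ : volume (topSet T A s₁ r₁ ∩ topSet T A s₂ r₂)
        + volume (topSet T A s₁ r₁ \ topSet T A s₂ r₂) = volume A := by
      rw [measure_inter_add_diff _ hm₂]; exact hE₁
    rw [step1, add_zero] at i₁
    have i₂ : volume (topSet T A s₂ r₂ ∩ topSet T A s₁ r₁)
        + volume (topSet T A s₂ r₂ \ topSet T A s₁ r₁) = volume A := by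
      rw [measure_inter_add_diff _ hm₁]; exact hE₂
    rw [inter_comm, i₁] at i₂
    have := i₂.trans (add_zero (volume A)).symm
    exact (ENNReal.add_right_inj hAfin.ne).mp this
  exact ae_eq_set.2 ⟨step1, step2⟩

end Main

end Stmt4Aux

open Stmt4Aux in
theorem stmt_4 {n : ℕ}
    (T : (EuclideanSpace ℝ (Fin n) → ℝ) → (EuclideanSpace ℝ (Fin n) → ℝ))
    (hmap : ∀ f, Symmetrizable f → Symmetrizable (T f))
    (hequi : ∀ f, Symmetrizable f → ∀ t : ℝ,
      volume {x | t < T f x} = volume {x | t < f x})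
    (hmono : ∀ f g, Symmetrizable f → Symmetrizable g →
      f ≤ᵐ[volume] g → T f ≤ᵐ[volume] T g)
    (A : Set (EuclideanSpace ℝ (Fin n))) (hA : MeasurableSet A) (hAfin : volume A < ⊤)
    (α β : ℝ) (hα : 0 ≤ α) :
    T (fun x => α * A.indicator 1 x + β) =ᵐ[volume]
      fun x => α * T (A.indicator 1) x + β := by
  rcases hα.eq_or_lt with h0 | hpos
  · -- case α = 0
    subst h0
    have hg : (fun x => (0:ℝ) * A.indicator 1 x + β) = aff A (0:ℝ) β := rfl
    have hsym : Symmetrizable (aff A (0:ℝ) β) := symm_aff A hA hAfin le_rfl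
    have hub : ∀ᵐ x ∂(volume : Measure (EuclideanSpace ℝ (Fin n))),
        T (aff A (0:ℝ) β) x ≤ β := by
      rw [ae_iff]
      have hset : {x | ¬ T (aff A (0:ℝ) β) x ≤ β} = {x | β < T (aff A (0:ℝ) β) x} := by
        ext x; simp
      rw [hset, hequi _ hsym, lev_empty A le_rfl (by linarith)]
      simp
    have hlb : ∀ᵐ x ∂(volume : Measure (EuclideanSpace ℝ (Fin n))),
        β ≤ T (aff A (0:ℝ) β) x := by
      apply ae_ge_of_levels (hmap _ hsym)
      intro t ht
      rw [hequi _ hsym, lev_univ A le_rfl ht]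
    rw [hg]
    filter_upwards [hub, hlb] with x h1 h2
    have : T (aff A (0:ℝ) β) x = β := le_antisymm h1 h2
    rw [this]; ring
  · -- case 0 < α
    have hindeq : (A.indicator 1 : EuclideanSpace ℝ (Fin n) → ℝ) = aff A 1 0 := by
      funext x; simp [aff]
    have hgeq : (fun x => α * A.indicator 1 x + β) = aff A α β := rfl
    have st1 := structure_lemma T A hmap hequi hA hAfin (s := α) (r := β) hpos
    have st2 := structure_lemma T A hmap hequi hA hAfin (s := 1) (r := 0) one_pos
    have Eeq : topSet T A α β =ᵐ[volume] topSet T A 1 0 := by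
      rcases le_or_gt 0 β with hb | hb
      · have c1 := chain T A hmap hequi hmono hA hAfin
          (s₁ := α) (r₁ := β) (s₂ := α + β + 1) (r₂ := β)
          hpos (by linarith) le_rfl (by linarith) (by linarith)
        have c2 := chain T A hmap hequi hmono hA hAfin
          (s₁ := β + 1) (r₁ := 0) (s₂ := α + β + 1) (r₂ := β)
          (by linarith) (by linarith) hb (by linarith) (by linarith)
        have c3 := chain T A hmap hequi hmono hA hAfin
          (s₁ := 1) (r₁ := 0) (s₂ := β + 1) (r₂ := 0)
          one_pos (by linarith) le_rfl (by linarith) (by linarith)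
        exact c1.trans (c2.symm.trans c3.symm)
      · have c1 := chain T A hmap hequi hmono hA hAfin
          (s₁ := α) (r₁ := β) (s₂ := α + 1 - β) (r₂ := β)
          hpos (by linarith) le_rfl (by linarith) (by linarith)
        have c2 := chain T A hmap hequi hmono hA hAfin
          (s₁ := α + 1 - β) (r₁ := β) (s₂ := α + 1) (r₂ := 0)
          (by linarith) (by linarith) (by linarith) (by linarith) (by linarith)
        have c3 := chain T A hmap hequi hmono hA hAfin
          (s₁ := 1) (r₁ := 0) (s₂ := α + 1) (r₂ := 0)
          one_pos (by linarith) le_rfl (by linarith) (by linarith)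
        exact (c1.trans c2).trans c3.symm
    have Eiff := eventuallyEq_set.mp Eeq
    rw [hgeq, hindeq]
    filter_upwards [st1, st2, Eiff] with x h1 h2 hiff
    by_cases hx : x ∈ topSet T A α β
    · rw [h1.1 hx, h2.1 (hiff.mp hx)]; ring
    · rw [h1.2 hx, h2.2 fun c => hx (hiff.mpr c)]; ring
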